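/- Let r > 1/2 and let y(·,r) : (0, ∞) → ℝ be a positive continuous function satisfying s < y(s,r) and the functional equation y(s,r)·y(s+2r,r) = (s+1)(s+2r−1) for all s > 0. Then for every s > 0, y(s,r) equals the infinite product (s+1)·∏_{n=0}^∞ ((s+2r−1+4nr)(s+4r+1+4nr))/((s+2r+1+4nr)(s+4r−1+4nr)), and this value equals the continued fraction s + K_{n=1}^∞ (((2n−1)²r² − (r−1)²)/(2s)), i.e. the limit of the convergents of the generalized continued fraction with integer part s, partial numerators a_n = (2n−1)²r² − (r−1)² and partial denominators b_n = 2s. -/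

import Mathlib

open Filter Real

/-- Numerators of the convergents of a generalized continued fraction with
integer part `b₀`, partial numerators `a n` and partial denominators `b n` (for `n ≥ 1`). -/
noncomputable def cfNum (b₀ : ℝ) (a b : ℕ → ℝ) : ℕ → ℝ
  | 0 => b₀
  | 1 => b 1 * b₀ + a 1
  | n + 2 => b (n + 2) * cfNum b₀ a b (n + 1) + a (n + 2) * cfNum b₀ a b n

/-- Denominators of the convergents of a generalized continued fraction. -/
noncomputable def cfDen (a b : ℕ → ℝ) : ℕ → ℝ
  | 0 => 1
  | 1 => b 1
  | n + 2 => b (n + 2) * cfDen a b (n + 1) + a (n + 2) * cfDen a b n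

/-- `IsCFLimit b₀ a b L` means: the convergents of the generalized continued fraction
`b₀ + a 1 / (b 1 + a 2 / (b 2 + ⋯))` tend to `L`. -/
def IsCFLimit (b₀ : ℝ) (a b : ℕ → ℝ) (L : ℝ) : Prop :=
  Filter.Tendsto (fun n => cfNum b₀ a b n / cfDen a b n) Filter.atTop (nhds L)

/-!
Any `y` with `s ≤ y s` and `y s * y (s + 2r) = (s + 1) (s + 2r - 1)` also satisfies `y s < s + 1`.
Telescoping the functional equation along `s, s + 4r, s + 8r, …` writes the partial products as
`y s * (t + 1) / y t` with `t = s + 4Nr → ∞`, and `(t + 1) / y t → 1`; so such a `y` is unique.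

The continued fraction converges (to a value `≥ s`) because its partial numerators grow only
quadratically: the gaps `∏ aᵢ / (Qₙ Qₙ₊₁)` between consecutive convergents are antitone, and
`Qₙ₊₁ / (aₙ₊₂ Qₙ)` times its successor is at least `1 / aₙ₊₃`, which forces the gaps to `0`.
Its value `L s` solves the same functional equation: the cross term
`Pₙ(s) Pₙ(s + 2r) - (s + 1)(s + 2r - 1) Qₙ(s) Qₙ(s + 2r)` equals `(-1)ⁿ⁺¹ a₁ ⋯ aₙ₊₁`, so the
products of convergents alternately undershoot and overshoot `(s + 1)(s + 2r - 1)`.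
-/

open Finset Topology

section ContinuedFraction

variable {b₀ : ℝ} {a b : ℕ → ℝ}

lemma cfNum_add_two (n : ℕ) :
    cfNum b₀ a b (n + 2) = b (n + 2) * cfNum b₀ a b (n + 1) + a (n + 2) * cfNum b₀ a b n := rfl

lemma cfDen_add_two (n : ℕ) :
    cfDen a b (n + 2) = b (n + 2) * cfDen a b (n + 1) + a (n + 2) * cfDen a b n := rfl

lemma cfNum_succ_mul_cfDen_sub (n : ℕ) :
    cfNum b₀ a b (n + 1) * cfDen a b n - cfNum b₀ a b n * cfDen a b (n + 1) =
      (-1) ^ n * ∏ i ∈ range (n + 1), a (i + 1) := by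
  induction n with
  | zero => simp only [cfNum, cfDen, zero_add, prod_range_one, pow_zero]; ring
  | succ n ih =>
    rw [cfNum_add_two, cfDen_add_two, prod_range_succ]
    linear_combination (-a (n + 2)) * ih

noncomputable def cfGap (a b : ℕ → ℝ) (n : ℕ) : ℝ :=
  (∏ i ∈ range (n + 1), a (i + 1)) / (cfDen a b n * cfDen a b (n + 1))

lemma cfNum_div_cfDen_succ_sub (hQ : ∀ n, cfDen a b n ≠ 0) (n : ℕ) :
    cfNum b₀ a b (n + 1) / cfDen a b (n + 1) - cfNum b₀ a b n / cfDen a b n =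
      (-1) ^ n * cfGap a b n := by
  rw [div_sub_div _ _ (hQ _) (hQ _), cfGap, mul_div_assoc', ← cfNum_succ_mul_cfDen_sub]
  ring

lemma cfNum_div_cfDen_eq_add_sum (hQ : ∀ n, cfDen a b n ≠ 0) (n : ℕ) :
    cfNum b₀ a b n / cfDen a b n = b₀ + ∑ i ∈ range n, (-1) ^ i * cfGap a b i := by
  induction n with
  | zero => simp [cfNum, cfDen]
  | succ n ih => rw [sum_range_succ, ← add_assoc, ← ih, ← cfNum_div_cfDen_succ_sub hQ]; ring

noncomputable def cfRatio (a b : ℕ → ℝ) (n : ℕ) : ℝ :=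
  cfDen a b (n + 1) / (a (n + 2) * cfDen a b n)

section Positive

variable (ha : ∀ n, 0 < a (n + 1)) (hb : ∀ n, 0 < b (n + 1))
include ha hb

lemma cfDen_pos (n : ℕ) : 0 < cfDen a b n := by
  induction n using Nat.twoStepInduction with
  | zero => exact one_pos
  | one => exact hb 0
  | more n ih₀ ih₁ => exact add_pos (mul_pos (hb _) ih₁) (mul_pos (ha _) ih₀)

lemma cfGap_pos (n : ℕ) : 0 < cfGap a b n :=
  div_pos (prod_pos fun i _ => ha i)
    (mul_pos (cfDen_pos ha hb n) (cfDen_pos ha hb (n + 1)))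

lemma cfRatio_pos (n : ℕ) : 0 < cfRatio a b n :=
  div_pos (cfDen_pos ha hb (n + 1)) (mul_pos (ha (n + 1)) (cfDen_pos ha hb n))

lemma cfGap_eq_cfGap_succ_mul (n : ℕ) :
    cfGap a b n = cfGap a b (n + 1) * (1 + b (n + 2) * cfRatio a b n) := by
  have h₀ := cfDen_pos ha hb n
  have h₁ := cfDen_pos ha hb (n + 1)
  have h₂ : 0 < b (n + 2) * cfDen a b (n + 1) + a (n + 2) * cfDen a b n :=
    cfDen_pos ha hb (n + 2)
  have : 0 < a (n + 2) := ha (n + 1)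
  rw [cfGap, cfGap, cfRatio, prod_range_succ _ (n + 1), show n + 1 + 1 = n + 2 from rfl,
    cfDen_add_two]
  field_simp
  rw [eq_div_iff (by linarith)]
  ring

lemma cfGap_antitone : Antitone (cfGap a b) := by
  refine antitone_nat_of_succ_le fun n => ?_
  rw [cfGap_eq_cfGap_succ_mul ha hb n]
  have := mul_pos (hb (n + 1)) (cfRatio_pos ha hb n)
  exact le_mul_of_one_le_right (cfGap_pos ha hb (n + 1)).le (by linarith)

lemma add_sum_div_cfGap_zero_le (n : ℕ) :
    (1 + ∑ i ∈ range n, b (i + 2) * cfRatio a b i) / cfGap a b 0 ≤ 1 / cfGap a b n := by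
  induction n with
  | zero => simp
  | succ n ih =>
    have hg := cfGap_pos ha hb
    have hc : 0 < b (n + 2) * cfRatio a b n := mul_pos (hb _) (cfRatio_pos ha hb n)
    have hmono : 1 / cfGap a b 0 ≤ 1 / cfGap a b n :=
      one_div_le_one_div_of_le (hg n) (cfGap_antitone ha hb (Nat.zero_le n))
    calc (1 + ∑ i ∈ range (n + 1), b (i + 2) * cfRatio a b i) / cfGap a b 0
        = (1 + ∑ i ∈ range n, b (i + 2) * cfRatio a b i) / cfGap a b 0
            + b (n + 2) * cfRatio a b n * (1 / cfGap a b 0) := by rw [sum_range_succ]; ring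
      _ ≤ 1 / cfGap a b n + b (n + 2) * cfRatio a b n * (1 / cfGap a b n) := by gcongr
      _ = 1 / cfGap a b (n + 1) := by
        have := hg (n + 1)
        rw [cfGap_eq_cfGap_succ_mul ha hb n]
        field_simp

lemma tendsto_cfGap_zero
    (hdiv : Tendsto (fun N => ∑ i ∈ range N, b (i + 2) * cfRatio a b i) atTop atTop) :
    Tendsto (cfGap a b) atTop (𝓝 0) := by
  have h : Tendsto (fun n => 1 / cfGap a b n) atTop atTop :=
    tendsto_atTop_mono (add_sum_div_cfGap_zero_le ha hb)
      ((tendsto_atTop_add_const_left _ 1 hdiv).atTop_div_const (cfGap_pos ha hb 0))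
  exact h.inv_tendsto_atTop.congr fun n => by simp

lemma inv_le_cfRatio_mul_cfRatio_succ (n : ℕ) :
    (a (n + 3))⁻¹ ≤ cfRatio a b n * cfRatio a b (n + 1) := by
  have h₀ := cfDen_pos ha hb n
  have h₁ := cfDen_pos ha hb (n + 1)
  have h₂ := ha (n + 1)
  have h₃ := ha (n + 2)
  calc (a (n + 3))⁻¹ = a (n + 2) * cfDen a b n / (a (n + 2) * a (n + 3) * cfDen a b n) := by
        field_simp
    _ ≤ (b (n + 2) * cfDen a b (n + 1) + a (n + 2) * cfDen a b n) /
          (a (n + 2) * a (n + 3) * cfDen a b n) := by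
        gcongr
        exact le_add_of_nonneg_left (mul_pos (hb (n + 1)) h₁).le
    _ = cfRatio a b n * cfRatio a b (n + 1) := by
        rw [cfRatio, cfRatio, ← cfDen_add_two]
        field_simp

lemma cfRatio_add_cfRatio_succ_ge {C : ℝ} (hC : 0 < C)
    (haC : ∀ n : ℕ, a (n + 1) ≤ (C * (n + 1)) ^ 2) (n : ℕ) :
    2 / (C * (n + 3)) ≤ cfRatio a b n + cfRatio a b (n + 1) := by
  have hx := cfRatio_pos ha hb n
  have hy := cfRatio_pos ha hb (n + 1)
  have hc : 0 < (C * (n + 3))⁻¹ := by positivity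
  have hprod : (C * (n + 3))⁻¹ ^ 2 ≤ cfRatio a b n * cfRatio a b (n + 1) :=
    calc (C * (n + 3))⁻¹ ^ 2 = ((C * (n + 3)) ^ 2)⁻¹ := inv_pow _ _
      _ ≤ (a (n + 3))⁻¹ :=
          inv_anti₀ (ha _) ((haC (n + 2)).trans_eq (by push_cast; ring))
      _ ≤ _ := inv_le_cfRatio_mul_cfRatio_succ ha hb n
  -- AM-GM
  rw [div_eq_mul_inv]
  nlinarith [sq_nonneg (cfRatio a b n - cfRatio a b (n + 1))]

lemma tendsto_sum_cfRatio_atTop {C : ℝ} (hC : 0 < C)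
    (haC : ∀ n : ℕ, a (n + 1) ≤ (C * (n + 1)) ^ 2) :
    Tendsto (fun N => ∑ i ∈ range N, cfRatio a b i) atTop atTop := by
  have hmono : Monotone (fun N => ∑ i ∈ range N, cfRatio a b i) :=
    monotone_nat_of_le_succ fun n => by
      rw [sum_range_succ]; linarith [cfRatio_pos ha hb n]
  have hpairs (M : ℕ) : 2 / (3 * C) * ∑ m ∈ range M, (1 / ((m : ℝ) + 1)) ≤
      ∑ i ∈ range (2 * M), cfRatio a b i := by
    induction M with
    | zero => simp
    | succ M ih =>
      have hterm : 2 / (3 * C) * (1 / ((M : ℝ) + 1)) ≤ 2 / (C * (((2 * M : ℕ) : ℝ) + 3)) := by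
        rw [div_mul_div_comm, mul_one]
        refine div_le_div_of_nonneg_left zero_le_two (by positivity) ?_
        push_cast
        nlinarith [(M.cast_nonneg : (0 : ℝ) ≤ M)]
      rw [show 2 * (M + 1) = 2 * M + 1 + 1 by ring, sum_range_succ, sum_range_succ,
        sum_range_succ, mul_add]
      linarith [cfRatio_add_cfRatio_succ_ge ha hb hC haC (2 * M)]
  have hsub : Tendsto (fun M => ∑ i ∈ range (2 * M), cfRatio a b i) atTop atTop :=
    tendsto_atTop_mono hpairs
      (tendsto_sum_range_one_div_nat_succ_atTop.const_mul_atTop (by positivity))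
  exact tendsto_atTop_of_monotone_of_subseq (φ := fun M => 2 * M) hmono hsub

end Positive

theorem exists_isCFLimit_of_le_sq {β C : ℝ} (hβ : 0 < β) (hC : 0 < C)
    (ha : ∀ n, 0 < a (n + 1)) (haC : ∀ n : ℕ, a (n + 1) ≤ (C * (n + 1)) ^ 2) :
    ∃ L, IsCFLimit b₀ a (fun _ => β) L ∧ b₀ ≤ L := by
  have hb : ∀ n : ℕ, 0 < (fun _ : ℕ => β) (n + 1) := fun _ => hβ
  have hgap := cfGap_antitone (b := fun _ => β) ha hb
  have hdiv : Tendsto (fun N => ∑ i ∈ range N, β * cfRatio a (fun _ => β) i) atTop atTop := by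
    simp_rw [← mul_sum]
    exact (tendsto_sum_cfRatio_atTop ha hb hC haC).const_mul_atTop hβ
  obtain ⟨l, hl⟩ := hgap.tendsto_alternating_series_of_tendsto_zero
    (tendsto_cfGap_zero (b := fun _ => β) ha hb hdiv)
  have hQ (n : ℕ) : cfDen a (fun _ => β) n ≠ 0 := (cfDen_pos (b := fun _ => β) ha hb n).ne'
  refine ⟨b₀ + l, ?_, le_add_of_nonneg_right ?_⟩
  · unfold IsCFLimit
    simp_rw [cfNum_div_cfDen_eq_add_sum hQ]
    exact tendsto_const_nhds.add hl
  · simpa using hgap.alternating_series_le_tendsto hl 0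

end ContinuedFraction

section Brouncker

noncomputable def brounckerCoeff (r : ℝ) (n : ℕ) : ℝ := (2 * (n : ℝ) - 1) ^ 2 * r ^ 2 - (r - 1) ^ 2

variable {r : ℝ}

lemma brounckerCoeff_succ (n : ℕ) :
    brounckerCoeff r (n + 1) = (2 * n * r + 1) * ((2 * n + 2) * r - 1) := by
  rw [brounckerCoeff]; push_cast; ring

lemma brounckerCoeff_succ_pos (hr : 1 / 2 < r) (n : ℕ) : 0 < brounckerCoeff r (n + 1) := by
  have hn : (0 : ℝ) ≤ n := n.cast_nonneg
  rw [brounckerCoeff_succ]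
  exact mul_pos (by positivity) (by nlinarith)

lemma brounckerCoeff_succ_le (n : ℕ) : brounckerCoeff r (n + 1) ≤ (2 * r * (n + 1)) ^ 2 := by
  have hn : (0 : ℝ) ≤ n := n.cast_nonneg
  rw [brounckerCoeff]; push_cast
  nlinarith [sq_nonneg (r - 1), mul_nonneg hn (sq_nonneg r)]

variable (r) in
noncomputable def brounckerCross (s : ℝ) (m n : ℕ) : ℝ :=
  cfNum s (brounckerCoeff r) (fun _ => 2 * s) m *
      cfNum (s + 2 * r) (brounckerCoeff r) (fun _ => 2 * (s + 2 * r)) n -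
    (s + 1) * (s + 2 * r - 1) * (cfDen (brounckerCoeff r) (fun _ => 2 * s) m *
      cfDen (brounckerCoeff r) (fun _ => 2 * (s + 2 * r)) n)

lemma brounckerCross_add_two_left (s : ℝ) (m n : ℕ) :
    brounckerCross r s (m + 2) n =
      2 * s * brounckerCross r s (m + 1) n + brounckerCoeff r (m + 2) * brounckerCross r s m n := by
  simp only [brounckerCross, cfNum_add_two, cfDen_add_two]; ring

lemma brounckerCross_add_two_right (s : ℝ) (m n : ℕ) :
    brounckerCross r s m (n + 2) = 2 * (s + 2 * r) * brounckerCross r s m (n + 1) +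
      brounckerCoeff r (n + 2) * brounckerCross r s m n := by
  simp only [brounckerCross, cfNum_add_two, cfDen_add_two]; ring

-- The mixed terms are carried along so that the induction closes.
lemma brounckerCross_eq (s : ℝ) (n : ℕ) :
    brounckerCross r s n n = (-1) ^ (n + 1) * ∏ i ∈ range (n + 1), brounckerCoeff r (i + 1) ∧
    brounckerCross r s (n + 1) n =
      (-1) ^ n * (∏ i ∈ range (n + 1), brounckerCoeff r (i + 1)) * (2 * r * (n + 1) - s) ∧
    brounckerCross r s n (n + 1) = (-1) ^ (n + 1) *
      (∏ i ∈ range (n + 1), brounckerCoeff r (i + 1)) * (s + 2 * r * (n + 1) + 2 * r) ∧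
    brounckerCross r s (n + 1) (n + 1) =
      (-1) ^ (n + 2) * ∏ i ∈ range (n + 2), brounckerCoeff r (i + 1) := by
  induction n with
  | zero =>
    simp only [brounckerCross, cfNum, cfDen, brounckerCoeff, prod_range_succ, prod_range_zero]
    push_cast
    refine ⟨by ring, by ring, by ring, by ring⟩
  | succ n ih =>
    obtain ⟨hD, hE, hE', hD₁⟩ := ih
    have hA₂ : ∏ i ∈ range (n + 2), brounckerCoeff r (i + 1) =
        (∏ i ∈ range (n + 1), brounckerCoeff r (i + 1)) * brounckerCoeff r (n + 2) :=
      prod_range_succ _ _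
    have hA₃ : ∏ i ∈ range (n + 3), brounckerCoeff r (i + 1) =
        (∏ i ∈ range (n + 1), brounckerCoeff r (i + 1)) * brounckerCoeff r (n + 2) *
          brounckerCoeff r (n + 3) := by
      rw [prod_range_succ, hA₂]
    have hdiff : brounckerCoeff r (n + 3) = brounckerCoeff r (n + 2) + 8 * r ^ 2 * (n + 2) := by
      simp only [brounckerCoeff]; push_cast; ring
    rw [hA₂] at hD₁
    rw [show n + 1 + 1 = n + 2 from rfl, show n + 1 + 2 = n + 3 from rfl, hA₂, hA₃,
      brounckerCross_add_two_left s n (n + 1), brounckerCross_add_two_left s n (n + 2),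
      brounckerCross_add_two_right s (n + 1) n, brounckerCross_add_two_right s n n]
    push_cast
    refine ⟨hD₁, ?_, ?_, ?_⟩
    · linear_combination (2 * s) * hD₁ + brounckerCoeff r (n + 2) * hE'
    · linear_combination (2 * (s + 2 * r)) * hD₁ + brounckerCoeff r (n + 2) * hE
    · linear_combination (2 * s) * (2 * (s + 2 * r)) * hD₁ + 2 * s * brounckerCoeff r (n + 2) * hE
        + 2 * (s + 2 * r) * brounckerCoeff r (n + 2) * hE' + brounckerCoeff r (n + 2) ^ 2 * hD
        + (-1) ^ n * (∏ i ∈ range (n + 1), brounckerCoeff r (i + 1)) * brounckerCoeff r (n + 2) *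
          hdiff

lemma exists_isCFLimit_brouncker (hr : 1 / 2 < r) {s : ℝ} (hs : 0 < s) :
    ∃ L, IsCFLimit s (brounckerCoeff r) (fun _ => 2 * s) L ∧ s ≤ L :=
  exists_isCFLimit_of_le_sq (by positivity) (by linarith) (brounckerCoeff_succ_pos hr)
    brounckerCoeff_succ_le

variable (r) in
noncomputable def brounckerValue (s : ℝ) : ℝ :=
  limUnder atTop fun n =>
    cfNum s (brounckerCoeff r) (fun _ => 2 * s) n / cfDen (brounckerCoeff r) (fun _ => 2 * s) n

lemma isCFLimit_brounckerValue (hr : 1 / 2 < r) {s : ℝ} (hs : 0 < s) :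
    IsCFLimit s (brounckerCoeff r) (fun _ => 2 * s) (brounckerValue r s) := by
  obtain ⟨L, hL, -⟩ := exists_isCFLimit_brouncker hr hs
  rwa [brounckerValue, Tendsto.limUnder_eq hL]

lemma le_brounckerValue (hr : 1 / 2 < r) {s : ℝ} (hs : 0 < s) : s ≤ brounckerValue r s := by
  obtain ⟨L, hL, hsL⟩ := exists_isCFLimit_brouncker hr hs
  rwa [brounckerValue, Tendsto.limUnder_eq hL]

lemma brouncker_convergent_mul_sub (hr : 1 / 2 < r) {s : ℝ} (hs : 0 < s) (n : ℕ) :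
    cfNum s (brounckerCoeff r) (fun _ => 2 * s) n / cfDen (brounckerCoeff r) (fun _ => 2 * s) n *
      (cfNum (s + 2 * r) (brounckerCoeff r) (fun _ => 2 * (s + 2 * r)) n /
        cfDen (brounckerCoeff r) (fun _ => 2 * (s + 2 * r)) n) - (s + 1) * (s + 2 * r - 1) =
    (-1) ^ (n + 1) * ((∏ i ∈ range (n + 1), brounckerCoeff r (i + 1)) /
      (cfDen (brounckerCoeff r) (fun _ => 2 * s) n *
        cfDen (brounckerCoeff r) (fun _ => 2 * (s + 2 * r)) n)) := by
  have hQ := cfDen_pos (b := fun _ => 2 * s) (brounckerCoeff_succ_pos hr)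
    (fun _ => by positivity) n
  have hQ' := cfDen_pos (b := fun _ => 2 * (s + 2 * r)) (brounckerCoeff_succ_pos hr)
    (fun _ => by linarith) n
  have h := (brounckerCross_eq (r := r) s n).1
  rw [brounckerCross] at h
  field_simp
  linear_combination h

lemma brounckerValue_mul_brounckerValue_add (hr : 1 / 2 < r) {s : ℝ} (hs : 0 < s) :
    brounckerValue r s * brounckerValue r (s + 2 * r) = (s + 1) * (s + 2 * r - 1) := by
  have hs' : 0 < s + 2 * r := by linarith
  have hlim := Tendsto.mul (isCFLimit_brounckerValue hr hs) (isCFLimit_brounckerValue hr hs')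
  have hA (n : ℕ) : 0 < (∏ i ∈ range (n + 1), brounckerCoeff r (i + 1)) /
      (cfDen (brounckerCoeff r) (fun _ => 2 * s) n *
        cfDen (brounckerCoeff r) (fun _ => 2 * (s + 2 * r)) n) :=
    div_pos (prod_pos fun i _ => brounckerCoeff_succ_pos hr i)
      (mul_pos (cfDen_pos (brounckerCoeff_succ_pos hr) (fun _ => by positivity) n)
        (cfDen_pos (brounckerCoeff_succ_pos hr) (fun _ => by positivity) n))
  -- even convergents undershoot the product, odd ones overshoot it
  apply le_antisymm
  · refine le_of_tendsto (hlim.comp (tendsto_atTop_mono (fun k => by dsimp; omega) tendsto_id :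
      Tendsto (fun k : ℕ => 2 * k) atTop atTop)) (Eventually.of_forall fun k => ?_)
    have h := brouncker_convergent_mul_sub hr hs (2 * k)
    simp only [Function.comp_apply]
    rw [pow_succ, pow_mul, neg_one_sq, one_pow, one_mul] at h
    linarith [hA (2 * k)]
  · refine ge_of_tendsto (hlim.comp (tendsto_atTop_mono (fun k => by dsimp; omega) tendsto_id :
      Tendsto (fun k : ℕ => 2 * k + 1) atTop atTop)) (Eventually.of_forall fun k => ?_)
    have h := brouncker_convergent_mul_sub hr hs (2 * k + 1)
    simp only [Function.comp_apply]
    rw [pow_succ, pow_succ, pow_mul, neg_one_sq, one_pow, one_mul] at h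
    linarith [hA (2 * k + 1)]

end Brouncker

section BrounckerProduct

variable {r : ℝ} {g : ℝ → ℝ} (hr : 0 < r) (hg : ∀ t, 0 < t → t ≤ g t)
  (hfun : ∀ t, 0 < t → g t * g (t + 2 * r) = (t + 1) * (t + 2 * r - 1))
include hr hg hfun

lemma lt_add_one_of_mul_eq {t : ℝ} (ht : 0 < t) : g t < t + 1 := by
  have h₁ := hg t ht
  have h₂ := hg (t + 2 * r) (by positivity)
  nlinarith [hfun t ht]

lemma tendsto_add_one_div_atTop : Tendsto (fun t => (t + 1) / g t) atTop (𝓝 1) := by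
  have hupper : Tendsto (fun t : ℝ => 1 + t⁻¹) atTop (𝓝 1) := by
    simpa using tendsto_inv_atTop_zero.const_add (1 : ℝ)
  refine tendsto_of_tendsto_of_tendsto_of_le_of_le' tendsto_const_nhds hupper ?_ ?_
  · filter_upwards [eventually_gt_atTop 0] with t ht
    rw [le_div_iff₀ (ht.trans_le (hg t ht)), one_mul]
    exact (lt_add_one_of_mul_eq hr hg hfun ht).le
  · filter_upwards [eventually_gt_atTop 0] with t ht
    calc (t + 1) / g t ≤ (t + 1) / t := div_le_div_of_nonneg_left (by linarith) ht (hg t ht)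
      _ = 1 + t⁻¹ := by field_simp

lemma add_one_div_mul_factor {t : ℝ} (ht : 0 < t) :
    (t + 1) / g t * ((t + 2 * r - 1) * (t + 4 * r + 1) / ((t + 2 * r + 1) * (t + 4 * r - 1))) =
      (t + 4 * r + 1) / g (t + 4 * r) := by
  have h₀ : 0 < g t := ht.trans_le (hg t ht)
  have h₂ : 0 < g (t + 2 * r) := by linarith [hg (t + 2 * r) (by positivity)]
  have h₄ : 0 < g (t + 4 * r) := by linarith [hg (t + 4 * r) (by positivity)]
  have hfun₂ := hfun (t + 2 * r) (by positivity)
  rw [show t + 2 * r + 2 * r = t + 4 * r by ring] at hfun₂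
  rw [← hfun₂, div_mul_div_comm, div_eq_div_iff (by positivity) h₄.ne']
  linear_combination (-(t + 4 * r + 1) * g (t + 4 * r)) * hfun t ht

lemma brouncker_partial_prod_eq {s : ℝ} (hs : 0 < s) (N : ℕ) :
    (s + 1) * ∏ n ∈ range N,
        ((s + 2 * r - 1 + 4 * (n : ℝ) * r) * (s + 4 * r + 1 + 4 * (n : ℝ) * r)) /
          ((s + 2 * r + 1 + 4 * (n : ℝ) * r) * (s + 4 * r - 1 + 4 * (n : ℝ) * r)) =
      g s * ((s + 4 * N * r + 1) / g (s + 4 * N * r)) := by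
  induction N with
  | zero =>
    simpa using (mul_div_cancel₀ (s + 1) (hs.trans_le (hg s hs)).ne').symm
  | succ N ih =>
    rw [prod_range_succ, ← mul_assoc, ih, mul_assoc]
    have hstep := add_one_div_mul_factor hr hg hfun (t := s + 4 * N * r) (by positivity)
    convert congrArg (g s * ·) hstep using 4 <;> push_cast <;> ring

lemma tendsto_brouncker_partial_prod {s : ℝ} (hs : 0 < s) :
    Tendsto (fun N : ℕ => (s + 1) * ∏ n ∈ range N,
        ((s + 2 * r - 1 + 4 * (n : ℝ) * r) * (s + 4 * r + 1 + 4 * (n : ℝ) * r)) /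
          ((s + 2 * r + 1 + 4 * (n : ℝ) * r) * (s + 4 * r - 1 + 4 * (n : ℝ) * r)))
      atTop (𝓝 (g s)) := by
  simp_rw [brouncker_partial_prod_eq hr hg hfun hs]
  have hN : Tendsto (fun N : ℕ => s + 4 * N * r) atTop atTop :=
    tendsto_atTop_add_const_left _ s
      ((tendsto_natCast_atTop_atTop.const_mul_atTop four_pos).atTop_mul_const hr)
  simpa using ((tendsto_add_one_div_atTop hr hg hfun).comp hN).const_mul (g s)

end BrounckerProduct

theorem euler_generalized_brouncker_general (r : ℝ) (hr : 1 / 2 < r) (y : ℝ → ℝ)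
    (hineq : ∀ s : ℝ, 0 < s → s < y s)
    (hfun : ∀ s : ℝ, 0 < s → y s * y (s + 2 * r) = (s + 1) * (s + 2 * r - 1)) :
    ∀ s : ℝ, 0 < s →
      Tendsto (fun N : ℕ => (s + 1) * ∏ n ∈ Finset.range N,
          ((s + 2*r - 1 + 4*(n : ℝ)*r) * (s + 4*r + 1 + 4*(n : ℝ)*r)) /
            ((s + 2*r + 1 + 4*(n : ℝ)*r) * (s + 4*r - 1 + 4*(n : ℝ)*r))) atTop (nhds (y s)) ∧
      IsCFLimit s (fun n => (2 * (n : ℝ) - 1) ^ 2 * r ^ 2 - (r - 1) ^ 2)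
        (fun _ => 2 * s) (y s) := by
  intro s hs
  have hr₀ : 0 < r := by linarith
  have hprod := tendsto_brouncker_partial_prod hr₀ (fun t ht => (hineq t ht).le) hfun hs
  -- the continued fraction solves the same functional equation, hence has the same product
  have hvalue : brounckerValue r s = y s :=
    tendsto_nhds_unique (tendsto_brouncker_partial_prod hr₀ (fun t ht => le_brounckerValue hr ht)
      (fun t ht => brounckerValue_mul_brounckerValue_add hr ht) hs) hprod
  exact ⟨hprod, hvalue ▸ isCFLimit_brounckerValue hr hs⟩

theorem euler_generalized_brouncker (r : ℝ) (hr : 1 / 2 < r) (y : ℝ → ℝ)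
    (hcont : ContinuousOn y (Set.Ioi 0)) (hpos : ∀ s : ℝ, 0 < s → 0 < y s)
    (hineq : ∀ s : ℝ, 0 < s → s < y s)
    (hfun : ∀ s : ℝ, 0 < s → y s * y (s + 2 * r) = (s + 1) * (s + 2 * r - 1)) :
    ∀ s : ℝ, 0 < s →
      Tendsto (fun N : ℕ => (s + 1) * ∏ n ∈ Finset.range N,
          ((s + 2*r - 1 + 4*(n : ℝ)*r) * (s + 4*r + 1 + 4*(n : ℝ)*r)) /
            ((s + 2*r + 1 + 4*(n : ℝ)*r) * (s + 4*r - 1 + 4*(n : ℝ)*r))) atTop (nhds (y s)) ∧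
      IsCFLimit s (fun n => (2 * (n : ℝ) - 1) ^ 2 * r ^ 2 - (r - 1) ^ 2)
        (fun _ => 2 * s) (y s) :=
  euler_generalized_brouncker_general r hr y hineq hfun
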